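/- Let Θ be an inner function with values in L(E), let Θ̃(z) = Θ(z̄)*, and let τ be the unitary operator from K_Θ onto K_Θ̃ given by (τf)(e^{it}) = e^{-it} Θ(e^{-it})* f(e^{-it}). Then the spaces of matrix valued truncated Toeplitz operators T_Θ and T_Θ̃ are spatially isomorphic via τ: namely τ T_Θ = T_Θ̃ τ, i.e. a bounded operator A on K_Θ belongs to T_Θ if and only if τ A τ* belongs to T_Θ̃. -/

import Mathlib

open MeasureTheory Complex ContinuousLinearMap
open scoped ComplexInnerProductSpace

noncomputable section

/-- The circle `𝕋`, realized as `ℝ / 2πℤ`; the point `t` corresponds to `e^{it}`. -/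
abbrev Circle2pi : Type := AddCircle (2 * Real.pi)

instance : Fact (0 < 2 * Real.pi) := ⟨by positivity⟩

/-- Normalized Haar (arc-length) measure on the circle. -/
abbrev haarCircle2pi : Measure Circle2pi := AddCircle.haarAddCircle

variable {E : Type} [NormedAddCommGroup E] [InnerProductSpace ℂ E] [FiniteDimensional ℂ E]

/-- `Θ`, given by its boundary-value function on the circle, is an inner function: it is
(a.e. strongly) measurable, its boundary values are a.e. unitary operators on `E`, and its
Fourier coefficients of negative index vanish (the latter says exactly that `Θ` is the
boundary-value function of a bounded analytic `L(E)`-valued function on the unit disc,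
i.e. an element of `H^∞(L(E))`). -/
structure IsInner (Θ : Circle2pi → (E →L[ℂ] E)) : Prop where
  meas : AEStronglyMeasurable Θ haarCircle2pi
  unit : ∀ᵐ t ∂haarCircle2pi, Θ t ∈ unitary (E →L[ℂ] E)
  anal : ∀ n : ℤ, n < 0 → fourierCoeff Θ n = 0

/-- Membership in the Hardy space `H²(E)`, viewed as the subspace of `L²(E)` of functions
whose Fourier coefficients of negative index vanish. -/
def MemH2 (f : Lp E 2 haarCircle2pi) : Prop :=
  ∀ n : ℤ, n < 0 → fourierCoeff (⇑f) n = 0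

/-- Membership in the model space `K_Θ = H²(E) ⊖ Θ H²(E)`: `f` belongs to `H²(E)` and is
orthogonal to `Θ H²(E)`. -/
def MemK (Θ : Circle2pi → (E →L[ℂ] E)) (f : Lp E 2 haarCircle2pi) : Prop :=
  MemH2 f ∧ ∀ g : Lp E 2 haarCircle2pi, MemH2 g →
    ∫ t, ⟪f t, Θ t (g t)⟫ ∂haarCircle2pi = 0

/-- The boundary values of `Θ̃(z) = Θ(z̄)*`, namely `Θ̃(e^{it}) = Θ(e^{-it})*`. -/
def tild (Θ : Circle2pi → (E →L[ℂ] E)) : Circle2pi → (E →L[ℂ] E) :=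
  fun t => adjoint (Θ (-t))

/-- `τ` is the operator on `L²(E)` given by `(τ f)(e^{it}) = e^{-it} Θ(e^{-it})* f(e^{-it})`. -/
def IsTau (Θ : Circle2pi → (E →L[ℂ] E))
    (τ : Lp E 2 haarCircle2pi →L[ℂ] Lp E 2 haarCircle2pi) : Prop :=
  ∀ f : Lp E 2 haarCircle2pi,
    (⇑(τ f)) =ᵐ[haarCircle2pi] fun t => fourier (-1) t • (adjoint (Θ (-t))) (f (-t))

/-- `P` is the orthogonal projection of `L²(E)` onto the model space `K_Θ`:
its range lies in `K_Θ`, it fixes `K_Θ`, and `f - P f` is orthogonal to `K_Θ`. -/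
def IsProjK (Θ : Circle2pi → (E →L[ℂ] E))
    (P : Lp E 2 haarCircle2pi →L[ℂ] Lp E 2 haarCircle2pi) : Prop :=
  (∀ f, MemK Θ (P f)) ∧ (∀ f, MemK Θ f → P f = f) ∧
    ∀ f g, MemK Θ g → ⟪f - P f, g⟫ = 0

/-- `S` acts on the model space `K_Θ` as the compressed shift `S_Θ f = P_Θ (z f)`:
for `f ∈ K_Θ`, `S f ∈ K_Θ` and `S f - z f` is orthogonal to `K_Θ`, i.e.
`⟪S f, g⟫ = ⟪z f, g⟫` for all `g ∈ K_Θ`. -/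
def IsCompShift (Θ : Circle2pi → (E →L[ℂ] E))
    (S : Lp E 2 haarCircle2pi →L[ℂ] Lp E 2 haarCircle2pi) : Prop :=
  ∀ f, MemK Θ f → MemK Θ (S f) ∧
    ∀ g, MemK Θ g → ⟪S f, g⟫ = ∫ t, ⟪fourier 1 t • f t, g t⟫ ∂haarCircle2pi

/-- `A` acts on the model space `K_Θ` as the adjoint `S_Θ*` of the compressed shift `S`:
for `f ∈ K_Θ`, `A f ∈ K_Θ` and `⟪A f, g⟫ = ⟪f, S g⟫` for all `g ∈ K_Θ`. -/
def IsCompShiftAdj (Θ : Circle2pi → (E →L[ℂ] E))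
    (S A : Lp E 2 haarCircle2pi →L[ℂ] Lp E 2 haarCircle2pi) : Prop :=
  ∀ f, MemK Θ f → MemK Θ (A f) ∧ ∀ g, MemK Θ g → ⟪A f, g⟫ = ⟪f, S g⟫

/-- The subspace `D = {(I - Θ(z) Θ(0)*) x : x ∈ E}` of `K_Θ`, described through boundary
values; here `Θ(0)` is the 0-th Fourier coefficient of `Θ`. -/
def DSet (Θ : Circle2pi → (E →L[ℂ] E)) : Set (Lp E 2 haarCircle2pi) :=
  {f | ∃ x : E, (⇑f) =ᵐ[haarCircle2pi]
    fun t => x - Θ t (adjoint (fourierCoeff Θ 0) x)}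

/-- The subspace `D_* = {(1/z)(Θ(z) - Θ(0)) x : x ∈ E}` of `K_Θ`, described through
boundary values. -/
def DStarSet (Θ : Circle2pi → (E →L[ℂ] E)) : Set (Lp E 2 haarCircle2pi) :=
  {f | ∃ x : E, (⇑f) =ᵐ[haarCircle2pi]
    fun t => fourier (-1) t • (Θ t x - fourierCoeff Θ 0 x)}

/-- `A` is a matrix-valued truncated Toeplitz operator on `K_Θ`, i.e. `A ∈ T_Θ`: there is a
symbol `Φ ∈ L²(L(E))` such that `A f = P_Θ (Φ f)` for every `f` in
`K_Θ^∞ = K_Θ ∩ H^∞(E)`; the compression is expressed by: `A f ∈ K_Θ` and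
`⟪A f, g⟫ = ⟪Φ f, g⟫` for every `g ∈ K_Θ`. -/
def MemTT (Θ : Circle2pi → (E →L[ℂ] E))
    (A : Lp E 2 haarCircle2pi →L[ℂ] Lp E 2 haarCircle2pi) : Prop :=
  ∃ Φ : Circle2pi → (E →L[ℂ] E), MemLp Φ 2 haarCircle2pi ∧
    ∀ f, MemK Θ f → MemLp (⇑f) ⊤ haarCircle2pi →
      MemK Θ (A f) ∧ ∀ g, MemK Θ g → ⟪A f, g⟫ = ∫ t, ⟪Φ t (f t), g t⟫ ∂haarCircle2pi

/-! The operator `τ` is unitary on `L²(E)`, and its adjoint is the analogous operator built from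
`Θ̃` (note `Θ̃̃ = Θ`); moreover `τ` maps `K_Θ` into `K_Θ̃`. If `A ∈ T_Θ` has symbol `Φ`, the change
of variables `t ↦ -t` shows that `τ A τ*` is the compression to `K_Θ̃` of the symbol
`Θ(z̄)* Φ(z̄) Θ(z̄)`, which is again square integrable. The converse is the same statement for
`Θ̃` and `τ*`. -/

open scoped ENNReal ComplexConjugate

theorem MeasureTheory.AEStronglyMeasurable.clm_apply {α F G : Type*} [MeasurableSpace α]
    {ν : Measure α} [NormedAddCommGroup F] [NormedSpace ℂ F] [NormedAddCommGroup G]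
    [NormedSpace ℂ G] {A : α → F →L[ℂ] G} {f : α → F}
    (hA : AEStronglyMeasurable A ν) (hf : AEStronglyMeasurable f ν) :
    AEStronglyMeasurable (fun t => A t (f t)) ν :=
  isBoundedBilinearMap_apply.continuous.comp_aestronglyMeasurable₂ hA hf

theorem MeasureTheory.MemLp.clm_apply_of_mem_unitary {α H : Type*} [MeasurableSpace α]
    {ν : Measure α} [NormedAddCommGroup H] [InnerProductSpace ℂ H] [CompleteSpace H]
    {p : ℝ≥0∞} {U : α → H →L[ℂ] H} {f : α → H} (hf : MemLp f p ν)
    (hU : AEStronglyMeasurable U ν) (hU_unit : ∀ᵐ t ∂ν, U t ∈ unitary (H →L[ℂ] H)) :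
    MemLp (fun t => U t (f t)) p ν :=
  hf.congr_norm (hU.clm_apply hf.1) <|
    hU_unit.mono fun _ ht => (norm_map_of_mem_unitary ht _).symm

section FourierCoeff

variable {T : ℝ}

theorem fourier_apply_neg (n : ℤ) (x : AddCircle T) : fourier n (-x) = fourier (-n) x := by
  rw [fourier_apply, fourier_apply, smul_neg, ← neg_smul]

theorem inner_fourier_smul_fourier_smul {F : Type*} [NormedAddCommGroup F]
    [InnerProductSpace ℂ F] (n : ℤ) (t : AddCircle T) (x y : F) :
    ⟪fourier n t • x, fourier n t • y⟫ = ⟪x, y⟫ := by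
  rw [inner_smul_left, inner_smul_right, ← mul_assoc, RCLike.conj_mul, fourier_apply,
    Circle.norm_coe, RCLike.ofReal_one, one_pow, one_mul]

variable [Fact (0 < T)] {F : Type*} [NormedAddCommGroup F] [NormedSpace ℂ F]

open AddCircle

theorem MeasureTheory.MemLp.fourier_smul {p : ℝ≥0∞} {f : AddCircle T → F}
    (hf : MemLp f p AddCircle.haarAddCircle) (n : ℤ) :
    MemLp (fun t => fourier n t • f t) p AddCircle.haarAddCircle :=
  hf.congr_norm ((fourier n).continuous.aestronglyMeasurable.smul hf.1) <|
    ae_of_all _ fun t => by rw [norm_smul, fourier_apply, Circle.norm_coe, one_mul]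

theorem fourierCoeff_comp_neg (f : AddCircle T → F) (n : ℤ) :
    fourierCoeff (fun t => f (-t)) n = fourierCoeff f (-n) := by
  rw [fourierCoeff, fourierCoeff, ← integral_neg_eq_self]
  simp only [fourier_apply_neg, neg_neg]

theorem fourierCoeff_fourier_smul (f : AddCircle T → F) (m n : ℤ) :
    fourierCoeff (fun t => fourier m t • f t) n = fourierCoeff f (n - m) := by
  simp only [fourierCoeff, smul_smul, ← fourier_add]
  ring_nf

theorem fourierCoeff_smul_const [CompleteSpace F] (f : AddCircle T → ℂ) (x : F) (n : ℤ) :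
    fourierCoeff (fun t => f t • x) n = fourierCoeff f n • x := by
  simp only [fourierCoeff, smul_smul, smul_eq_mul]
  exact integral_smul_const _ x

theorem fourierCoeff_fourier_smul_const [CompleteSpace F] (m n : ℤ) (x : F) :
    fourierCoeff (fun t : AddCircle T => fourier m t • x) n = if n = m then x else 0 := by
  rw [fourierCoeff_smul_const, fourierCoeff_fourier]
  split_ifs with h <;> simp [h]

theorem fourierCoeff_inner {F : Type*} [NormedAddCommGroup F] [InnerProductSpace ℂ F]
    [CompleteSpace F] {f : AddCircle T → F} (hf : Integrable f haarAddCircle) (x : F) (n : ℤ) :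
    fourierCoeff (fun t => ⟪x, f t⟫) n = ⟪x, fourierCoeff f n⟫ := by
  simp only [fourierCoeff, ← inner_smul_right_eq_smul]
  exact integral_inner (hf.fourier_smul _) x

theorem integral_conj_mul_eq_zero_of_fourierCoeff {u v : AddCircle T → ℂ}
    (hu : MemLp u 2 haarAddCircle) (hv : MemLp v 2 haarAddCircle)
    (hu0 : ∀ n : ℤ, n < 0 → fourierCoeff u n = 0) (hv0 : ∀ n : ℤ, 0 ≤ n → fourierCoeff v n = 0) :
    ∫ t, conj (u t) * v t ∂haarAddCircle = 0 := by
  have hcoeff : ∀ {w : AddCircle T → ℂ} (hw : MemLp w 2 haarAddCircle) (n : ℤ),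
      ⟪fourierBasis n, hw.toLp w⟫ = fourierCoeff w n := fun hw n => by
    rw [← fourierBasis.repr_apply_apply, fourierBasis_repr, fourierCoeff_congr_ae hw.coeFn_toLp]
  calc ∫ t, conj (u t) * v t ∂haarAddCircle = ⟪hu.toLp u, hv.toLp v⟫ := by
        rw [L2.inner_def]
        refine integral_congr_ae ?_
        filter_upwards [hu.coeFn_toLp, hv.coeFn_toLp] with t htu htv
        rw [htu, htv, RCLike.inner_apply, mul_comm]
    _ = ∑' n, conj (fourierCoeff u n) * fourierCoeff v n := by
        rw [← fourierBasis.tsum_inner_mul_inner]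
        simp only [← inner_conj_symm (hu.toLp u), hcoeff]
    _ = 0 := by
        refine (tsum_congr fun n => ?_).trans tsum_zero
        rcases lt_or_ge n 0 with hn | hn
        · rw [hu0 n hn, map_zero, zero_mul]
        · rw [hv0 n hn, mul_zero]

theorem integral_inner_eq_zero_of_fourierCoeff {F : Type*} [NormedAddCommGroup F]
    [InnerProductSpace ℂ F] [FiniteDimensional ℂ F] {f g : AddCircle T → F}
    (hf : MemLp f 2 haarAddCircle) (hg : MemLp g 2 haarAddCircle)
    (hf0 : ∀ n : ℤ, n < 0 → fourierCoeff f n = 0) (hg0 : ∀ n : ℤ, 0 ≤ n → fourierCoeff g n = 0) :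
    ∫ t, ⟪f t, g t⟫ ∂haarAddCircle = 0 := by
  -- Expand in an orthonormal basis of `F` and apply the scalar case to each coordinate.
  set b := stdOrthonormalBasis ℂ F
  have hcomp (i) : ∫ t, conj ⟪b i, f t⟫ * ⟪b i, g t⟫ ∂haarAddCircle = 0 :=
    integral_conj_mul_eq_zero_of_fourierCoeff (hf.const_inner (b i)) (hg.const_inner (b i))
      (fun n hn => by
        rw [fourierCoeff_inner (hf.integrable one_le_two), hf0 n hn, inner_zero_right])
      (fun n hn => by
        rw [fourierCoeff_inner (hg.integrable one_le_two), hg0 n hn, inner_zero_right])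
  have hint (i) : Integrable (fun t => conj ⟪b i, f t⟫ * ⟪b i, g t⟫) haarAddCircle :=
    (hf.const_inner (b i)).star.integrable_mul (hg.const_inner (b i))
  calc ∫ t, ⟪f t, g t⟫ ∂haarAddCircle = ∫ t, ∑ i, conj ⟪b i, f t⟫ * ⟪b i, g t⟫ ∂haarAddCircle := by
        simp only [inner_conj_symm, b.sum_inner_mul_inner]
    _ = 0 := by
        rw [integral_finsetSum _ fun i _ => hint i]
        exact Finset.sum_eq_zero fun i _ => hcomp i

end FourierCoeff

local notation "μ" => haarCircle2pi

theorem ae_comp_neg {p : Circle2pi → Prop} (h : ∀ᵐ t ∂μ, p t) : ∀ᵐ t ∂μ, p (-t) :=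
  (Measure.measurePreserving_neg μ).quasiMeasurePreserving.ae h

structure IsUnitaryValued (Θ : Circle2pi → (E →L[ℂ] E)) : Prop where
  meas : AEStronglyMeasurable Θ μ
  unit : ∀ᵐ t ∂μ, Θ t ∈ unitary (E →L[ℂ] E)

theorem IsInner.isUnitaryValued {Θ : Circle2pi → (E →L[ℂ] E)} (hΘ : IsInner Θ) :
    IsUnitaryValued Θ :=
  ⟨hΘ.meas, hΘ.unit⟩

namespace IsUnitaryValued

variable {Θ : Circle2pi → (E →L[ℂ] E)}

theorem adjoint (hΘ : IsUnitaryValued Θ) :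
    IsUnitaryValued fun t => ContinuousLinearMap.adjoint (Θ t) where
  meas := hΘ.meas.star
  unit := hΘ.unit.mono fun t ht => by
    rw [← star_eq_adjoint]
    exact Unitary.star_mem ht

theorem comp_neg (hΘ : IsUnitaryValued Θ) : IsUnitaryValued fun t => Θ (-t) where
  meas := hΘ.meas.comp_measurePreserving (Measure.measurePreserving_neg μ)
  unit := ae_comp_neg (p := fun t => Θ t ∈ unitary (E →L[ℂ] E)) hΘ.unit

theorem tild (hΘ : IsUnitaryValued Θ) : IsUnitaryValued (tild Θ) :=
  hΘ.comp_neg.adjoint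

theorem memLp_adjoint_mul_mul (hΘ : IsUnitaryValued Θ) {p : ℝ≥0∞}
    {Φ : Circle2pi → (E →L[ℂ] E)} (hΦ : MemLp Φ p μ) :
    MemLp (fun t => ContinuousLinearMap.adjoint (Θ t) * Φ t * Θ t) p μ := by
  refine hΦ.congr_norm ((hΘ.adjoint.meas.mul hΦ.1).mul hΘ.meas) ?_
  filter_upwards [hΘ.unit, hΘ.adjoint.unit] with t ht ht'
  rw [CStarRing.norm_mul_mem_unitary _ ht, CStarRing.norm_mem_unitary_mul _ ht']

end IsUnitaryValued

theorem tild_apply (Θ : Circle2pi → (E →L[ℂ] E)) (t : Circle2pi) :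
    tild Θ t = adjoint (Θ (-t)) :=
  rfl

theorem tild_tild (Θ : Circle2pi → (E →L[ℂ] E)) : tild (tild Θ) = Θ := by
  funext t
  rw [tild_apply, tild_apply, neg_neg, adjoint_adjoint]

def tauFun (Θ : Circle2pi → (E →L[ℂ] E)) (f : Circle2pi → E) (t : Circle2pi) : E :=
  fourier (-1) t • tild Θ t (f (-t))

theorem isTau_iff {Θ : Circle2pi → (E →L[ℂ] E)} {τ : Lp E 2 μ →L[ℂ] Lp E 2 μ} :
    IsTau Θ τ ↔ ∀ f, ⇑(τ f) =ᵐ[μ] tauFun Θ f :=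
  Iff.rfl

theorem tauFun_tild_apply_neg (Θ : Circle2pi → (E →L[ℂ] E)) (g : Circle2pi → E) (t : Circle2pi) :
    tauFun (tild Θ) g (-t) = fourier 1 t • Θ (-t) (g t) := by
  rw [tauFun, fourier_apply_neg, neg_neg, tild_tild, neg_neg]

theorem memLp_tauFun {Θ : Circle2pi → (E →L[ℂ] E)} (hΘ : IsUnitaryValued Θ) {p : ℝ≥0∞}
    {f : Circle2pi → E} (hf : MemLp f p μ) : MemLp (tauFun Θ f) p μ :=
  ((hf.comp_measurePreserving (Measure.measurePreserving_neg μ)).clm_apply_of_mem_unitary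
    hΘ.tild.meas hΘ.tild.unit).fourier_smul (-1)

theorem integral_inner_tauFun (Θ : Circle2pi → (E →L[ℂ] E)) (f g : Circle2pi → E) :
    ∫ t, ⟪tauFun Θ f t, g t⟫ ∂μ = ∫ t, ⟪f t, tauFun (tild Θ) g t⟫ ∂μ := by
  rw [← integral_neg_eq_self (fun t => ⟪f t, tauFun (tild Θ) g t⟫)]
  congr 1
  funext t
  rw [tauFun_tild_apply_neg, tauFun, inner_smul_left, inner_smul_right, tild_apply,
    adjoint_inner_left, ← fourier_neg, neg_neg]

theorem MemK.fourierCoeff_adjoint_apply_eq_zero {Θ : Circle2pi → (E →L[ℂ] E)}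
    (hΘ : IsUnitaryValued Θ) {f : Lp E 2 μ} (hf : MemK Θ f) {k : ℤ} (hk : 0 ≤ k) :
    fourierCoeff (fun t => adjoint (Θ t) (f t)) k = 0 := by
  have hint : Integrable (fun t => adjoint (Θ t) (f t)) μ :=
    ((Lp.memLp f).clm_apply_of_mem_unitary hΘ.adjoint.meas hΘ.adjoint.unit).integrable
      one_le_two
  -- `⟪x, ·⟫` of the `k`-th coefficient is the conjugate pairing of `f` with `Θ (z ^ k x) ∈ Θ H²`.
  refine ext_inner_left ℂ fun x => ?_
  have hx : MemLp (fun t => fourier k t • x) 2 μ := (memLp_const x).fourier_smul k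
  have hx_H2 : MemH2 (hx.toLp _) := fun n hn => by
    rw [fourierCoeff_congr_ae hx.coeFn_toLp, fourierCoeff_fourier_smul_const, if_neg (by omega)]
  rw [inner_zero_right, ← fourierCoeff_inner hint]
  calc fourierCoeff (fun t => ⟪x, adjoint (Θ t) (f t)⟫) k
      = conj (∫ t, ⟪f t, Θ t (hx.toLp _ t)⟫ ∂μ) := by
        rw [← integral_conj]
        refine integral_congr_ae ?_
        filter_upwards [hx.coeFn_toLp] with t ht
        rw [ht, map_smul, inner_smul_right, map_mul, inner_conj_symm, ← fourier_neg,
          adjoint_inner_right, smul_eq_mul]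
    _ = 0 := by rw [hf.2 _ hx_H2, map_zero]

namespace IsTau

variable {Θ : Circle2pi → (E →L[ℂ] E)} {τ : Lp E 2 μ →L[ℂ] Lp E 2 μ}

theorem inner_map_map (hΘ : IsUnitaryValued Θ) (hτ : IsTau Θ τ) (f g : Lp E 2 μ) :
    ⟪τ f, τ g⟫ = ⟪f, g⟫ := by
  rw [L2.inner_def, L2.inner_def, ← integral_neg_eq_self (fun t => ⟪f t, g t⟫)]
  refine integral_congr_ae ?_
  filter_upwards [hτ f, hτ g, hΘ.tild.unit] with t hf hg hu
  rw [hf, hg, inner_fourier_smul_fourier_smul, ← tild_apply, inner_map_map_of_mem_unitary hu]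

theorem adjoint_apply_apply (hΘ : IsUnitaryValued Θ) (hτ : IsTau Θ τ) (f : Lp E 2 μ) :
    adjoint τ (τ f) = f :=
  ext_inner_left ℂ fun g => by rw [adjoint_inner_right, hτ.inner_map_map hΘ]

theorem tild_adjoint (hΘ : IsUnitaryValued Θ) (hτ : IsTau Θ τ) :
    IsTau (tild Θ) (ContinuousLinearMap.adjoint τ) := by
  refine isTau_iff.2 fun G => ?_
  have hG := memLp_tauFun hΘ.tild (Lp.memLp G)
  suffices ContinuousLinearMap.adjoint τ G = hG.toLp _ from this ▸ hG.coeFn_toLp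
  refine ext_inner_left ℂ fun f => ?_
  rw [adjoint_inner_right, L2.inner_def, L2.inner_def]
  calc ∫ t, ⟪(τ f) t, G t⟫ ∂μ = ∫ t, ⟪tauFun Θ f t, G t⟫ ∂μ :=
        integral_congr_ae <| by filter_upwards [isTau_iff.1 hτ f] with t ht; rw [ht]
    _ = ∫ t, ⟪f t, tauFun (tild Θ) G t⟫ ∂μ := integral_inner_tauFun Θ f G
    _ = ∫ t, ⟪f t, hG.toLp _ t⟫ ∂μ :=
        integral_congr_ae <| by filter_upwards [hG.coeFn_toLp] with t ht; rw [ht]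

theorem memH2 (hΘ : IsUnitaryValued Θ) (hτ : IsTau Θ τ) {f : Lp E 2 μ} (hf : MemK Θ f) :
    MemH2 (τ f) := by
  intro n hn
  rw [fourierCoeff_congr_ae (hτ f), fourierCoeff_fourier_smul (fun t => adjoint (Θ (-t)) (f (-t))),
    fourierCoeff_comp_neg (fun t => adjoint (Θ t) (f t))]
  exact hf.fourierCoeff_adjoint_apply_eq_zero hΘ (by omega)

theorem integral_inner_tild_eq_zero (hΘ : IsUnitaryValued Θ) (hτ : IsTau Θ τ) {f : Lp E 2 μ}
    (hf : MemH2 f) {g : Lp E 2 μ} (hg : MemH2 g) :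
    ∫ t, ⟪(τ f) t, tild Θ t (g t)⟫ ∂μ = 0 := by
  -- After `t ↦ -t` this pairs `f ∈ H²` with `e^{-it} g(-t)`, which has only negative frequencies.
  have hh : MemLp (fun s => fourier (-1) s • g (-s)) 2 μ :=
    ((Lp.memLp g).comp_measurePreserving (Measure.measurePreserving_neg μ)).fourier_smul (-1)
  have hh0 (n : ℤ) (hn : 0 ≤ n) : fourierCoeff (fun s => fourier (-1) s • g (-s)) n = 0 := by
    rw [fourierCoeff_fourier_smul (fun s => g (-s)), fourierCoeff_comp_neg]
    exact hg _ (by omega)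
  rw [← integral_inner_eq_zero_of_fourierCoeff (Lp.memLp f) hh hf hh0,
    ← integral_neg_eq_self (fun t => ⟪f t, fourier (-1) t • g (-t)⟫)]
  refine integral_congr_ae ?_
  filter_upwards [hτ f, hΘ.tild.unit] with t ht hu
  rw [ht, ← tild_apply, inner_smul_left, inner_map_map_of_mem_unitary hu, neg_neg,
    fourier_apply_neg, inner_smul_right, ← fourier_neg]

theorem memK (hΘ : IsUnitaryValued Θ) (hτ : IsTau Θ τ) {f : Lp E 2 μ} (hf : MemK Θ f) :
    MemK (tild Θ) (τ f) :=
  ⟨hτ.memH2 hΘ hf, fun _ hg => hτ.integral_inner_tild_eq_zero hΘ hf.1 hg⟩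

theorem integral_inner_apply_apply {σ : Lp E 2 μ →L[ℂ] Lp E 2 μ} (hσ : IsTau (tild Θ) σ)
    (Φ : Circle2pi → (E →L[ℂ] E)) (F G : Lp E 2 μ) :
    ∫ t, ⟪Φ t ((σ F) t), (σ G) t⟫ ∂μ =
      ∫ t, ⟪(ContinuousLinearMap.adjoint (Θ (-t)) * Φ (-t) * Θ (-t)) (F t), G t⟫ ∂μ := by
  rw [← integral_neg_eq_self
    (fun t => ⟪(ContinuousLinearMap.adjoint (Θ (-t)) * Φ (-t) * Θ (-t)) (F t), G t⟫)]
  refine integral_congr_ae ?_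
  filter_upwards [hσ F, hσ G] with t hF hG
  rw [hF, hG, tild_apply, neg_neg, adjoint_adjoint, map_smul, inner_fourier_smul_fourier_smul,
    mul_def, mul_def, comp_apply, comp_apply, adjoint_inner_left]

end IsTau

theorem MemTT.tau_comp {Θ : Circle2pi → (E →L[ℂ] E)} {τ A : Lp E 2 μ →L[ℂ] Lp E 2 μ}
    (hΘ : IsUnitaryValued Θ) (hτ : IsTau Θ τ) (hA : MemTT Θ A) :
    MemTT (tild Θ) (τ.comp (A.comp (adjoint τ))) := by
  obtain ⟨Φ, hΦ, hAΦ⟩ := hA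
  have hσ := hτ.tild_adjoint hΘ
  have hσK {F : Lp E 2 μ} (hF : MemK (tild Θ) F) : MemK Θ (adjoint τ F) := by
    simpa only [tild_tild] using hσ.memK hΘ.tild hF
  refine ⟨fun t => adjoint (Θ (-t)) * Φ (-t) * Θ (-t),
    (hΘ.memLp_adjoint_mul_mul hΦ).comp_measurePreserving (Measure.measurePreserving_neg μ),
    fun F hF hF_top => ?_⟩
  obtain ⟨hAF, hAF_inner⟩ :=
    hAΦ _ (hσK hF) ((memLp_tauFun hΘ.tild hF_top).ae_eq (hσ F).symm)
  refine ⟨hτ.memK hΘ hAF, fun G hG => ?_⟩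
  calc ⟪τ (A (adjoint τ F)), G⟫ = ⟪A (adjoint τ F), adjoint τ G⟫ :=
        (adjoint_inner_right τ _ _).symm
    _ = ∫ t, ⟪Φ t ((adjoint τ F) t), (adjoint τ G) t⟫ ∂μ := hAF_inner _ (hσK hG)
    _ = _ := hσ.integral_inner_apply_apply Φ F G

theorem spatial_isomorphism_general (Θ : Circle2pi → (E →L[ℂ] E)) (hΘ : IsInner Θ)
    (τ : Lp E 2 haarCircle2pi →L[ℂ] Lp E 2 haarCircle2pi) (hτ : IsTau Θ τ)
    (A : Lp E 2 haarCircle2pi →L[ℂ] Lp E 2 haarCircle2pi) :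
    MemTT Θ A ↔ MemTT (tild Θ) (τ.comp (A.comp (adjoint τ))) := by
  have hΘ' := hΘ.isUnitaryValued
  refine ⟨MemTT.tau_comp hΘ' hτ, fun h => ?_⟩
  have h_conj : (adjoint τ).comp ((τ.comp (A.comp (adjoint τ))).comp τ) = A := by
    ext1 f
    simp only [comp_apply, hτ.adjoint_apply_apply hΘ']
  simpa only [tild_tild, adjoint_adjoint, h_conj] using h.tau_comp hΘ'.tild (hτ.tild_adjoint hΘ')

/-- **Spatial Isomorphism Theorem.** Let `Θ` be inner, `Θ̃(z) = Θ(z̄)*`,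
and let `τ` be the unitary operator `(τ f)(e^{it}) = e^{-it} Θ(e^{-it})* f(e^{-it})`
mapping `K_Θ` onto `K_Θ̃`. Then `τ T_Θ = T_Θ̃ τ`: a bounded operator `A` on `K_Θ`
belongs to `T_Θ` if and only if `τ A τ*` belongs to `T_Θ̃`. -/
theorem spatial_isomorphism (Θ : Circle2pi → (E →L[ℂ] E)) (hΘ : IsInner Θ)
    (τ : Lp E 2 haarCircle2pi →L[ℂ] Lp E 2 haarCircle2pi) (hτ : IsTau Θ τ)
    (A : Lp E 2 haarCircle2pi →L[ℂ] Lp E 2 haarCircle2pi)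
    (hA : ∀ f, MemK Θ f → MemK Θ (A f)) :
    MemTT Θ A ↔ MemTT (tild Θ) (τ.comp (A.comp (adjoint τ))) :=
  spatial_isomorphism_general Θ hΘ τ hτ A
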